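/- arXiv:1101.2875 — 3 statements merged into one kernel-verified Lean document; each statement's English description precedes it below -/
import Mathlib

section
/- For every integer n ≥ 1, every real x, and every real q with 0 ≤ q < 1, the limit as β → 1⁻ of R_n(x|β,q)/(β;q)_n exists and equals 2·T_n(x·√(1−q)/2)/(1−q)^{n/2}, where T_n is the Chebyshev polynomial of the first kind. -/
noncomputable section

open Finset

/-- The q-integer `[n]_q = 1 + q + ⋯ + q^{n-1}`. -/
def qInt (q : ℝ) (n : ℕ) : ℝ := ∑ i ∈ Finset.range n, q ^ i

/-- The q-factorial `[n]_q!`. -/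
def qFact (q : ℝ) (n : ℕ) : ℝ := ∏ j ∈ Finset.range n, qInt q (j + 1)

/-- The q-binomial coefficient. -/
def qBinom (q : ℝ) (n k : ℕ) : ℝ :=
  if k ≤ n then qFact q n / (qFact q (n - k) * qFact q k) else 0

/-- The finite q-Pochhammer symbol `(a;q)_n`. -/
def qPoch (a q : ℝ) (n : ℕ) : ℝ := ∏ j ∈ Finset.range n, (1 - a * q ^ j)

/-- The infinite q-Pochhammer symbol `(a;q)_∞`. -/
def qPochInf (a q : ℝ) : ℝ := ∏' j : ℕ, (1 - a * q ^ j)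

/-- The q-Hermite polynomials `H_n(x|q)`. -/
def qHermite (q : ℝ) : ℕ → ℝ → ℝ
  | 0, _ => 1
  | 1, x => x
  | n + 2, x => x * qHermite q (n + 1) x - qInt q (n + 1) * qHermite q n x

/-- The rescaled q-ultraspherical polynomials `R_n(x|β,q)`. -/
def qUltra (q β : ℝ) : ℕ → ℝ → ℝ
  | 0, _ => 1
  | 1, x => (1 - β) * x
  | n + 2, x => (1 - β * q ^ (n + 1)) * x * qUltra q β (n + 1) x
      - (1 - β ^ 2 * q ^ n) * qInt q (n + 1) * qUltra q β n x

/-- The Al-Salam–Chihara polynomials `P_n(x|y,ρ,q)`. -/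
def ASC (q y ρ : ℝ) : ℕ → ℝ → ℝ
  | 0, _ => 1
  | 1, x => x - ρ * y
  | n + 2, x => (x - ρ * y * q ^ (n + 1)) * ASC q y ρ (n + 1) x
      - (1 - ρ ^ 2 * q ^ n) * qInt q (n + 1) * ASC q y ρ n x

/-- The polynomials `B_n(y|q)` (q⁻¹-Hermite related). -/
def qB (q : ℝ) : ℕ → ℝ → ℝ
  | 0, _ => 1
  | 1, y => -y
  | n + 2, y => -q ^ (n + 1) * y * qB q (n + 1) y + q ^ n * qInt q (n + 1) * qB q n y

/-- The big q-Hermite polynomials `H_n(x|a,q)`. -/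
def bigqHermite (q a : ℝ) : ℕ → ℝ → ℝ
  | 0, _ => 1
  | 1, x => x - a
  | n + 2, x => (x - a * q ^ (n + 1)) * bigqHermite q a (n + 1) x
      - qInt q (n + 1) * bigqHermite q a n x

/-- The probabilistic Hermite polynomials `H_n(x)`. -/
def probHermite : ℕ → ℝ → ℝ
  | 0, _ => 1
  | 1, x => x
  | n + 2, x => x * probHermite (n + 1) x - (n + 1) * probHermite n x

/-- The probabilistic Hermite polynomials on ℂ. -/
def probHermiteC : ℕ → ℂ → ℂ
  | 0, _ => 1
  | 1, x => x
  | n + 2, x => x * probHermiteC (n + 1) x - (n + 1) * probHermiteC n x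

/-- The Chebyshev polynomials of the second kind. -/
def chebU : ℕ → ℝ → ℝ
  | 0, _ => 1
  | 1, x => 2 * x
  | n + 2, x => 2 * x * chebU (n + 1) x - chebU n x

/-- The Chebyshev polynomials of the first kind. -/
def chebT : ℕ → ℝ → ℝ
  | 0, _ => 1
  | 1, x => x
  | n + 2, x => 2 * x * chebT (n + 1) x - chebT n x

/-- `W_k(x,y,t|q)`. -/
def Wk (q x y t : ℝ) (k : ℕ) : ℝ :=
  (1 - t ^ 2 * q ^ (2 * k)) ^ 2 - (1 - q) * x * y * t * q ^ k * (1 + t ^ 2 * q ^ (2 * k))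
    + (1 - q) * t ^ 2 * q ^ (2 * k) * (x ^ 2 + y ^ 2)

/-- `V_k(x,a|q)`. -/
def Vk (q x a : ℝ) (k : ℕ) : ℝ :=
  1 - (1 - q) * a * x * q ^ k + (1 - q) * a ^ 2 * q ^ (2 * k)

/-- `L_k(x,a|q)`. -/
def Lk (q x a : ℝ) (k : ℕ) : ℝ :=
  (1 + a * q ^ k) ^ 2 - (1 - q) * x ^ 2 * a ^ 2 * q ^ k

/-- The support interval `S(q) = [-2/√(1-q), 2/√(1-q)]` for `|q| < 1`. -/
def Sq (q : ℝ) : Set ℝ := Set.Icc (-(2 / Real.sqrt (1 - q))) (2 / Real.sqrt (1 - q))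

/-! Both `R_n(x|β,q)` and `(β;q)_n` carry the factor `1 - β` for `n ≥ 1`. After cancelling it, the
quotient is a ratio of polynomials in `β` whose denominator `(βq;q)_{n-1}` does not vanish at
`β = 1`, so the limit is the value at `β = 1`. There the three-term recurrence, rescaled by
`(1 - q)^{n/2}`, is the Chebyshev recurrence at `x √(1-q) / 2`; the factor `2` comes from
`(1 - β²)/(1 - β) → 2` in the step from `R_1` to `R_2`. -/

open Filter Topology

/-- `qUltraDivOneSub q x n β = R_{n+1}(x|β,q) / (1 - β)`, written as a polynomial in `β` so that it
is defined at `β = 1`. -/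
def qUltraDivOneSub (q x : ℝ) : ℕ → ℝ → ℝ
  | 0, _ => x
  | 1, β => (1 - β * q) * x ^ 2 - (1 + β)
  | n + 2, β => (1 - β * q ^ (n + 2)) * x * qUltraDivOneSub q x (n + 1) β
      - (1 - β ^ 2 * q ^ (n + 1)) * qInt q (n + 2) * qUltraDivOneSub q x n β

lemma qPoch_succ' (a q : ℝ) (n : ℕ) : qPoch a q (n + 1) = (1 - a) * qPoch (a * q) q n := by
  simp only [qPoch, prod_range_succ', pow_zero, mul_one, pow_succ', mul_assoc, mul_comm]

lemma qPoch_pos {a q : ℝ} (ha : a < 1) (hq0 : 0 ≤ q) (hq1 : q ≤ 1) (n : ℕ) : 0 < qPoch a q n := by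
  refine prod_pos fun j _ => ?_
  have hpow0 : 0 ≤ q ^ j := pow_nonneg hq0 j
  have hpow1 : q ^ j ≤ 1 := pow_le_one₀ hq0 hq1
  rcases le_or_gt 0 a with ha0 | ha0 <;> nlinarith

lemma qUltra_succ_eq_one_sub_mul (q β x : ℝ) :
    ∀ n, qUltra q β (n + 1) x = (1 - β) * qUltraDivOneSub q x n β
  | 0 => by simp [qUltra, qUltraDivOneSub]
  | 1 => by simp only [qUltra, qUltraDivOneSub, qInt, zero_add, range_one, sum_singleton]; ring
  | n + 2 => by
    rw [qUltra, qUltra_succ_eq_one_sub_mul q β x (n + 1), qUltra_succ_eq_one_sub_mul q β x n,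
      qUltraDivOneSub]
    ring

lemma continuous_qUltraDivOneSub (q x : ℝ) : ∀ n, Continuous (qUltraDivOneSub q x n)
  | 0 => continuous_const
  | 1 => by simp only [qUltraDivOneSub]; fun_prop
  | n + 2 => by
    have := continuous_qUltraDivOneSub q x (n + 1)
    have := continuous_qUltraDivOneSub q x n
    simp only [qUltraDivOneSub]
    fun_prop

/-- The rescaling works because `s ^ 2 [n]_q = 1 - q ^ n` is the new factor of `(q;q)_n`. -/
lemma qUltraDivOneSub_one_mul_pow {q s : ℝ} (hs : s ^ 2 = 1 - q) (x : ℝ) :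
    ∀ n, qUltraDivOneSub q x n 1 * s ^ (n + 1) = 2 * chebT (n + 1) (x * s / 2) * qPoch q q n
  | 0 => by simp only [qUltraDivOneSub, chebT, qPoch, range_zero, prod_empty]; ring
  | 1 => by
    simp only [qUltraDivOneSub, chebT, qPoch, range_one, prod_singleton]
    linear_combination (-2 : ℝ) * hs
  | n + 2 => by
    have ih₁ := qUltraDivOneSub_one_mul_pow hs x (n + 1)
    have ih₀ := qUltraDivOneSub_one_mul_pow hs x n
    have hInt : s ^ 2 * qInt q (n + 2) = 1 - q ^ (n + 2) := by rw [hs, qInt, mul_neg_geom_sum]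
    simp only [qUltraDivOneSub, chebT, qPoch, prod_range_succ] at ih₁ ih₀ ⊢
    linear_combination (1 - q ^ (n + 2)) * x * s * ih₁ - (1 - q ^ (n + 1)) * (1 - q ^ (n + 2)) * ih₀
      - (1 - q ^ (n + 1)) * qUltraDivOneSub q x n 1 * s ^ (n + 1) * hInt

lemma qUltra_div_qPoch_eq {β : ℝ} (hβ : β ≠ 1) (q x : ℝ) (n : ℕ) :
    qUltra q β (n + 1) x / qPoch β q (n + 1) = qUltraDivOneSub q x n β / qPoch (β * q) q n := by
  rw [qUltra_succ_eq_one_sub_mul, qPoch_succ', mul_div_mul_left _ _ (sub_ne_zero.mpr hβ.symm)]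

lemma tendsto_qUltra_div_qPoch {q : ℝ} {n : ℕ} (h : qPoch q q n ≠ 0) (x : ℝ) :
    Tendsto (fun β => qUltra q β (n + 1) x / qPoch β q (n + 1)) (𝓝[≠] 1)
      (𝓝 (qUltraDivOneSub q x n 1 / qPoch q q n)) := by
  have hPoch : Continuous fun β : ℝ => qPoch (β * q) q n := by unfold qPoch; fun_prop
  have hlim := ((continuous_qUltraDivOneSub q x n).tendsto 1).div (hPoch.tendsto 1)
    (by rwa [one_mul])
  rw [one_mul] at hlim
  refine (hlim.mono_left nhdsWithin_le_nhds).congr' ?_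
  filter_upwards [self_mem_nhdsWithin] with β hβ using (qUltra_div_qPoch_eq hβ q x n).symm

/-- For `n ≥ 1`, `0 ≤ q < 1`, the limit as `β → 1⁻` of
`R_n(x|β,q)/(β;q)_n` equals `2·T_n(x√(1-q)/2)/(1-q)^{n/2}`. -/
theorem qUltra_div_qPoch_tendsto (n : ℕ) (hn : 1 ≤ n) (x q : ℝ) (hq0 : 0 ≤ q) (hq1 : q < 1) :
    Filter.Tendsto (fun β : ℝ => qUltra q β n x / qPoch β q n)
      (nhdsWithin 1 (Set.Iio 1))
      (nhds (2 * chebT n (x * Real.sqrt (1 - q) / 2) / (1 - q) ^ ((n : ℝ) / 2))) := by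
  obtain ⟨n, rfl⟩ : ∃ m, n = m + 1 := ⟨n - 1, by omega⟩
  have hPoch : 0 < qPoch q q n := qPoch_pos hq1 hq0 hq1.le n
  have hs : Real.sqrt (1 - q) ^ 2 = 1 - q := Real.sq_sqrt (by linarith)
  have hs0 : 0 < Real.sqrt (1 - q) := Real.sqrt_pos.mpr (by linarith)
  have hlimit : qUltraDivOneSub q x n 1 / qPoch q q n
      = 2 * chebT (n + 1) (x * Real.sqrt (1 - q) / 2) / (1 - q) ^ (((n + 1 : ℕ) : ℝ) / 2) := by
    rw [Real.rpow_div_two_eq_sqrt _ (by linarith), Real.rpow_natCast,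
      div_eq_div_iff hPoch.ne' (pow_pos hs0 _).ne', qUltraDivOneSub_one_mul_pow hs]
  rw [← hlimit]
  exact (tendsto_qUltra_div_qPoch hPoch.ne' x).mono_left
    (nhdsWithin_mono _ fun β (hβ : β < 1) => hβ.ne)
end
end

section
/- For all real t, x, y with |t| < 1, |x| < 2 and |y| < 2, the series Σ_{n=0}^∞ tⁿ·U_n(x/2)·U_n(y/2) converges and equals (1 − t²) / ((1 − t²)² − t(1 + t²)xy + t²(x² + y²)). -/
noncomputable section

open Finset

/-!
For `|a| < 1` every solution of `u (n + 2) = 2 a u (n + 1) - u n` is bounded, because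
`u (n + 1) ^ 2 + u n ^ 2 - 2 a u (n + 1) u n` is constant and dominates `(1 - |a|) u n ^ 2`.
The pairs `(u n, u (n + 1)) ⊗ (v n, v (n + 1))` evolve by the linear map `T = t (M_a ⊗ M_b)`,
`M_a` the companion matrix of the recurrence, and `det (1 - T)` is the denominator
`D = (1 - t²)² - 4t(1 + t²)ab + 4t²(a² + b²)`. A row of the adjugate of `1 - T` gives `E n`,
`t ^ n` times a bilinear form in these pairs, with `E n - E (n + 1) = D t ^ n u n v n`; since `E`
is summable, the series telescopes to `E 0 / D`, which is `(1 - t²) / D` for `u = U (a)`,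
`v = U (b)`. Writing `a = cos α`, `b = cos β`, `D` factors as
`(1 - 2t cos (α + β) + t²) (1 - 2t cos (α - β) + t²)`, which is positive for `|t| < 1`.
-/

def kernelDenom (t a b : ℝ) : ℝ :=
  (1 - t ^ 2) ^ 2 - 4 * t * (1 + t ^ 2) * a * b + 4 * t ^ 2 * (a ^ 2 + b ^ 2)

theorem one_sub_two_mul_mul_add_sq_pos {t c : ℝ} (ht : |t| < 1) (hc : |c| ≤ 1) :
    0 < 1 - 2 * t * c + t ^ 2 := by
  have htc : t * c ≤ |t| :=
    calc t * c ≤ |t * c| := le_abs_self _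
      _ = |t| * |c| := abs_mul t c
      _ ≤ |t| := mul_le_of_le_one_right (abs_nonneg t) hc
  nlinarith [sq_abs t, pow_pos (sub_pos.2 ht) 2]

theorem sqrt_one_sub_sq_mul_one_sub_sq_le {a b : ℝ} (ha : |a| ≤ 1) (hb : |b| ≤ 1) :
    √((1 - a ^ 2) * (1 - b ^ 2)) ≤ 1 - |a * b| := by
  rw [abs_mul, Real.sqrt_le_iff]
  constructor
  · nlinarith [abs_nonneg a, abs_nonneg b]
  · nlinarith [sq_abs a, sq_abs b, sq_nonneg (|a| - |b|)]

theorem kernelDenom_eq_mul {s : ℝ} (t a b : ℝ) (hs : s ^ 2 = (1 - a ^ 2) * (1 - b ^ 2)) :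
    kernelDenom t a b = (1 - 2 * t * (a * b + s) + t ^ 2) * (1 - 2 * t * (a * b - s) + t ^ 2) := by
  unfold kernelDenom
  linear_combination (4 * t ^ 2) * hs

theorem kernelDenom_pos {t a b : ℝ} (ht : |t| < 1) (ha : |a| ≤ 1) (hb : |b| ≤ 1) :
    0 < kernelDenom t a b := by
  have hprod : 0 ≤ (1 - a ^ 2) * (1 - b ^ 2) :=
    mul_nonneg (sub_nonneg.2 ((sq_le_one_iff_abs_le_one a).2 ha))
      (sub_nonneg.2 ((sq_le_one_iff_abs_le_one b).2 hb))
  set s := √((1 - a ^ 2) * (1 - b ^ 2))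
  have hs0 : 0 ≤ s := Real.sqrt_nonneg _
  have hs1 : s ≤ 1 - |a * b| := sqrt_one_sub_sq_mul_one_sub_sq_le ha hb
  have hab₁ := neg_abs_le (a * b)
  have hab₂ := le_abs_self (a * b)
  rw [kernelDenom_eq_mul t a b (Real.sq_sqrt hprod)]
  exact mul_pos (one_sub_two_mul_mul_add_sq_pos ht (abs_le.2 ⟨by linarith, by linarith⟩))
    (one_sub_two_mul_mul_add_sq_pos ht (abs_le.2 ⟨by linarith, by linarith⟩))

theorem two_mul_mul_mul_le_abs_mul (a p q : ℝ) : 2 * a * p * q ≤ |a| * (p ^ 2 + q ^ 2) := by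
  have hpq : 2 * |p * q| ≤ p ^ 2 + q ^ 2 := by
    rw [abs_mul]
    nlinarith [sq_abs p, sq_abs q, sq_nonneg (|p| - |q|)]
  calc 2 * a * p * q = a * (2 * (p * q)) := by ring
    _ ≤ |a * (2 * (p * q))| := le_abs_self _
    _ = |a| * (2 * |p * q|) := by rw [abs_mul, abs_mul, abs_two]
    _ ≤ |a| * (p ^ 2 + q ^ 2) := mul_le_mul_of_nonneg_left hpq (abs_nonneg a)

section Recurrence

variable {a : ℝ} {u : ℕ → ℝ}

theorem sq_add_sq_sub_mul_eq_of_recurrence (hu : ∀ n, u (n + 2) = 2 * a * u (n + 1) - u n)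
    (n : ℕ) :
    u (n + 1) ^ 2 + u n ^ 2 - 2 * a * u (n + 1) * u n
      = u 1 ^ 2 + u 0 ^ 2 - 2 * a * u 1 * u 0 := by
  induction n with
  | zero => rfl
  | succ n ih =>
    rw [hu n]
    linear_combination ih

theorem abs_le_sqrt_of_recurrence (hu : ∀ n, u (n + 2) = 2 * a * u (n + 1) - u n)
    (ha : |a| < 1) (n : ℕ) :
    |u n| ≤ √((u 1 ^ 2 + u 0 ^ 2 - 2 * a * u 1 * u 0) / (1 - |a|)) := by
  apply Real.abs_le_sqrt
  rw [le_div_iff₀ (sub_pos.2 ha), ← sq_add_sq_sub_mul_eq_of_recurrence hu n]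
  nlinarith [two_mul_mul_mul_le_abs_mul a (u (n + 1)) (u n),
    mul_nonneg (sub_pos.2 ha).le (sq_nonneg (u (n + 1)))]

end Recurrence

theorem summable_pow_mul_mul {t P Q : ℝ} {p q : ℕ → ℝ} (ht : |t| < 1)
    (hp : ∀ n, |p n| ≤ P) (hq : ∀ n, |q n| ≤ Q) : Summable fun n => t ^ n * p n * q n := by
  refine Summable.of_norm_bounded
    ((summable_geometric_of_lt_one (abs_nonneg t) ht).mul_right (P * Q)) fun n => ?_
  rw [Real.norm_eq_abs, abs_mul, abs_mul, abs_pow, mul_assoc]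
  exact mul_le_mul_of_nonneg_left
    (mul_le_mul (hp n) (hq n) (abs_nonneg _) ((abs_nonneg _).trans (hp n))) (by positivity)

theorem hasSum_sub_succ {G : Type*} [AddCommGroup G] [TopologicalSpace G]
    [IsTopologicalAddGroup G] {f : ℕ → G} (hf : Summable f) :
    HasSum (fun n => f n - f (n + 1)) (f 0) := by
  simpa using hf.hasSum.sub ((hasSum_nat_add_iff' 1).2 hf.hasSum)

def kernelTail (t a b : ℝ) (u v : ℕ → ℝ) (n : ℕ) : ℝ :=
  (kernelDenom t a b + t ^ 2 * (1 - t ^ 2)) * (t ^ n * u n * v n)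
    + 2 * t ^ 2 * (a * t - b) * (t ^ n * u n * v (n + 1))
    + 2 * t ^ 2 * (b * t - a) * (t ^ n * u (n + 1) * v n)
    + t * (1 - t ^ 2) * (t ^ n * u (n + 1) * v (n + 1))

section Kernel

variable {t a b : ℝ} {u v : ℕ → ℝ}

theorem kernelTail_sub_succ (hu : ∀ n, u (n + 2) = 2 * a * u (n + 1) - u n)
    (hv : ∀ n, v (n + 2) = 2 * b * v (n + 1) - v n) (n : ℕ) :
    kernelTail t a b u v n - kernelTail t a b u v (n + 1)
      = kernelDenom t a b * (t ^ n * u n * v n) := by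
  simp only [kernelTail, kernelDenom, hu n, hv n]
  ring

theorem summable_kernelTail (hu : ∀ n, u (n + 2) = 2 * a * u (n + 1) - u n)
    (hv : ∀ n, v (n + 2) = 2 * b * v (n + 1) - v n) (ht : |t| < 1) (ha : |a| < 1)
    (hb : |b| < 1) : Summable (kernelTail t a b u v) := by
  have hu₀ := abs_le_sqrt_of_recurrence hu ha
  have hv₀ := abs_le_sqrt_of_recurrence hv hb
  have hu₁ : ∀ n, |u (n + 1)| ≤ _ := fun n => hu₀ (n + 1)
  have hv₁ : ∀ n, |v (n + 1)| ≤ _ := fun n => hv₀ (n + 1)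
  exact ((((summable_pow_mul_mul ht hu₀ hv₀).mul_left _).add
    ((summable_pow_mul_mul ht hu₀ hv₁).mul_left _)).add
    ((summable_pow_mul_mul ht hu₁ hv₀).mul_left _)).add
    ((summable_pow_mul_mul ht hu₁ hv₁).mul_left _)

theorem hasSum_pow_mul_mul_of_recurrence (hu : ∀ n, u (n + 2) = 2 * a * u (n + 1) - u n)
    (hv : ∀ n, v (n + 2) = 2 * b * v (n + 1) - v n) (ht : |t| < 1) (ha : |a| < 1)
    (hb : |b| < 1) :
    HasSum (fun n => t ^ n * u n * v n) (kernelTail t a b u v 0 / kernelDenom t a b) := by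
  have hD := (kernelDenom_pos ht ha.le hb.le).ne'
  have h := (hasSum_sub_succ (summable_kernelTail hu hv ht ha hb)).div_const (kernelDenom t a b)
  simpa only [kernelTail_sub_succ hu hv, mul_div_cancel_left₀ _ hD] using h

end Kernel

theorem chebU_add_two (n : ℕ) (a : ℝ) : chebU (n + 2) a = 2 * a * chebU (n + 1) a - chebU n a :=
  rfl

theorem hasSum_pow_mul_chebU_mul_chebU {t a b : ℝ} (ht : |t| < 1) (ha : |a| < 1) (hb : |b| < 1) :
    HasSum (fun n => t ^ n * chebU n a * chebU n b) ((1 - t ^ 2) / kernelDenom t a b) := by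
  have h := hasSum_pow_mul_mul_of_recurrence (u := (chebU · a)) (v := (chebU · b))
    (fun n => chebU_add_two n a) (fun n => chebU_add_two n b) ht ha hb
  have hE₀ : kernelTail t a b (chebU · a) (chebU · b) 0 = 1 - t ^ 2 := by
    simp only [kernelTail, kernelDenom, chebU]
    ring
  rwa [hE₀] at h

/-- the Chebyshev-U kernel. -/
theorem chebU_kernel (t x y : ℝ) (ht : |t| < 1) (hx : |x| < 2) (hy : |y| < 2) :
    HasSum (fun n : ℕ => t ^ n * chebU n (x / 2) * chebU n (y / 2))
      ((1 - t ^ 2) /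
        ((1 - t ^ 2) ^ 2 - t * (1 + t ^ 2) * x * y + t ^ 2 * (x ^ 2 + y ^ 2))) := by
  have half_lt_one {z : ℝ} (hz : |z| < 2) : |z / 2| < 1 := by
    rw [abs_div, abs_two]
    linarith
  convert hasSum_pow_mul_chebU_mul_chebU ht (half_lt_one hx) (half_lt_one hy) using 2
  unfold kernelDenom
  ring
end
end

section
/- For all integers n, m ≥ 0, every real x, and every real q with |q| < 1, one has Σ_{k=0}^n [n choose k]_q·B_{n−k}(x|q)·H_{k+m}(x|q) = 0 if n > m, and = (−1)ⁿ·q^{n(n−1)/2}·([m]_q!/[m−n]_q!)·H_{m−n}(x|q) if m ≥ n. -/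
noncomputable section

open Finset

/-!
Both sides, viewed as functions of `(n, m)`, satisfy
`S(n+2, m) = S(n+1, m+1) - q^(n+1) x S(n+1, m) + q^n [n+1]_q S(n, m)` and agree for `n = 0, 1`.
For the sum, split `[n+2 choose k]_q` by the q-Pascal rule: one half is `S(n+1, m+1)`, and in
the other the recurrence of `B_{n+2-k}` together with
`[n+1 choose k]_q [n+1-k]_q = [n+1]_q [n choose k]_q` produces the last two terms. For the closed form the recurrence reduces to that of
`H_{m-n}`.
-/

section QNumbers

variable (q : ℝ)

lemma qInt_zero : qInt q 0 = 0 := by simp [qInt]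

lemma qInt_add (a b : ℕ) : qInt q (a + b) = qInt q a + q ^ a * qInt q b := by
  simp only [qInt, Finset.sum_range_add, pow_add, Finset.mul_sum]

lemma qFact_succ (n : ℕ) : qFact q (n + 1) = qFact q n * qInt q (n + 1) :=
  Finset.prod_range_succ _ _

variable {q}

/-- Over `ℝ`, `[n]_q` vanishes only for `q = -1` and `n` even. -/
lemma qInt_succ_ne_zero (hq : q ≠ -1) (n : ℕ) : qInt q (n + 1) ≠ 0 := by
  by_cases h1 : q = 1
  · simp [qInt, h1, Nat.cast_add_one_ne_zero]
  · rw [qInt, geom_sum_eq h1]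
    have hpow : q ^ (n + 1) ≠ 1 := by
      rw [Ne, pow_eq_one_iff_cases]
      tauto
    exact div_ne_zero (sub_ne_zero.mpr hpow) (sub_ne_zero.mpr h1)

lemma qFact_ne_zero (hq : q ≠ -1) (n : ℕ) : qFact q n ≠ 0 :=
  Finset.prod_ne_zero_iff.mpr fun j _ => qInt_succ_ne_zero hq j

end QNumbers

section QBinom

variable {q : ℝ}

lemma qBinom_of_lt {n k : ℕ} (h : n < k) : qBinom q n k = 0 := by
  rw [qBinom, if_neg (by omega)]

lemma qBinom_eq_div {n j k : ℕ} (h : k + j = n) :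
    qBinom q n k = qFact q n / (qFact q j * qFact q k) := by
  rw [qBinom, if_pos (by omega), show n - k = j by omega]

lemma qBinom_zero_right (hq : q ≠ -1) (n : ℕ) : qBinom q n 0 = 1 := by
  simpa [qFact, qBinom] using div_self (qFact_ne_zero hq n)

lemma qBinom_self (hq : q ≠ -1) (n : ℕ) : qBinom q n n = 1 := by
  simpa [qFact, qBinom] using div_self (qFact_ne_zero hq n)

lemma qBinom_succ_succ (hq : q ≠ -1) (n k : ℕ) :
    qBinom q (n + 1) (k + 1) = qBinom q n k + q ^ (k + 1) * qBinom q n (k + 1) := by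
  rcases lt_trichotomy k n with h | rfl | h
  · obtain ⟨j, rfl⟩ := Nat.exists_eq_add_of_lt h
    have hsplit : qInt q (k + j + 2) = qInt q (k + 1) + q ^ (k + 1) * qInt q (j + 1) := by
      rw [← qInt_add]; ring_nf
    rw [qBinom_eq_div (j := j + 1) (by omega), qBinom_eq_div (k := k) (j := j + 1) (by omega),
      qBinom_eq_div (k := k + 1) (j := j) (by omega), show k + j + 1 + 1 = k + j + 2 by ring,
      qFact_succ q (k + j + 1), qFact_succ q j, qFact_succ q k, hsplit]
    have := qFact_ne_zero hq j
    have := qFact_ne_zero hq k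
    have := qInt_succ_ne_zero hq j
    have := qInt_succ_ne_zero hq k
    field_simp
  · rw [qBinom_self hq, qBinom_self hq, qBinom_of_lt (Nat.lt_succ_self k), mul_zero, add_zero]
  · rw [qBinom_of_lt (by omega), qBinom_of_lt h, qBinom_of_lt (by omega), mul_zero, add_zero]

lemma qBinom_mul_qInt (hq : q ≠ -1) (j k : ℕ) :
    qBinom q (k + j + 1) k * qInt q (j + 1) = qInt q (k + j + 1) * qBinom q (k + j) k := by
  rw [qBinom_eq_div (j := j + 1) (by omega), qBinom_eq_div (k := k) (j := j) rfl,
    qFact_succ q (k + j), qFact_succ q j]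
  have := qFact_ne_zero hq j
  have := qFact_ne_zero hq k
  have := qInt_succ_ne_zero hq j
  field_simp

end QBinom

section QDescFactorial

variable (q : ℝ)

/-- `[m]_q [m-1]_q ⋯ [m-n+1]_q`; for `n > m` the factor `[0]_q` makes it vanish. -/
def qDescFactorial (m n : ℕ) : ℝ := ∏ j ∈ Finset.range n, qInt q (m - j)

@[simp]
lemma qDescFactorial_zero_right (m : ℕ) : qDescFactorial q m 0 = 1 := by
  simp [qDescFactorial]

lemma qDescFactorial_succ (m n : ℕ) :
    qDescFactorial q m (n + 1) = qDescFactorial q m n * qInt q (m - n) :=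
  Finset.prod_range_succ _ _

lemma qDescFactorial_succ_succ (m n : ℕ) :
    qDescFactorial q (m + 1) (n + 1) = qInt q (m + 1) * qDescFactorial q m n := by
  simp only [qDescFactorial, Finset.prod_range_succ', Nat.add_sub_add_right, Nat.sub_zero]
  ring

lemma qDescFactorial_eq_zero_of_lt {m n : ℕ} (h : m < n) : qDescFactorial q m n = 0 :=
  Finset.prod_eq_zero (Finset.mem_range.mpr h) (by rw [Nat.sub_self, qInt_zero])

lemma qDescFactorial_mul_qFact {m n : ℕ} (h : n ≤ m) :
    qDescFactorial q m n * qFact q (m - n) = qFact q m := by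
  induction n with
  | zero => simp
  | succ n ih =>
    have hsub : m - n = m - (n + 1) + 1 := by omega
    rw [qDescFactorial_succ, mul_assoc, hsub, mul_comm (qInt q _), ← qFact_succ, ← hsub,
      ih (by omega)]

lemma qDescFactorial_eq_div {q : ℝ} (hq : q ≠ -1) {m n : ℕ} (h : n ≤ m) :
    qDescFactorial q m n = qFact q m / qFact q (m - n) := by
  rw [eq_div_iff (qFact_ne_zero hq _), qDescFactorial_mul_qFact q h]

end QDescFactorial

section Recurrences

variable (q x : ℝ)

/-- The three-term recurrence of `H`, in a form valid for every `j` since `[0]_q = 0`. -/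
lemma qHermite_succ (j : ℕ) :
    qHermite q (j + 1) x = x * qHermite q j x - qInt q j * qHermite q (j - 1) x := by
  cases j with
  | zero => simp [qHermite, qInt_zero]
  | succ j => rw [qHermite, Nat.add_sub_cancel]

lemma qInt_mul_qHermite (d : ℕ) :
    qInt q d * (x * qHermite q (d - 1) x - qHermite q d x)
      = qInt q d * qInt q (d - 1) * qHermite q (d - 2) x := by
  cases d with
  | zero => simp [qInt_zero]
  | succ d => rw [qHermite_succ, Nat.add_sub_cancel, show d + 1 - 2 = d - 1 by omega]; ring

lemma qB_add_two (j : ℕ) :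
    qB q (j + 2) x
      = -q ^ (j + 1) * x * qB q (j + 1) x + q ^ j * qInt q (j + 1) * qB q j x := by
  rw [qB]

lemma pow_triangle_succ (n : ℕ) :
    q ^ ((n + 1) * (n + 1 - 1) / 2) = q ^ n * q ^ (n * (n - 1) / 2) := by
  rw [← Nat.choose_two_right, ← Nat.choose_two_right, Nat.choose_succ_succ', Nat.choose_one_right,
    pow_add]

end Recurrences

section Sum

variable (q x : ℝ)

def qBHermiteSum (n m : ℕ) : ℝ :=
  ∑ k ∈ Finset.range (n + 1), qBinom q n k * qB q (n - k) x * qHermite q (k + m) x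

def qBHermiteClosedForm (n m : ℕ) : ℝ :=
  (-1) ^ n * q ^ (n * (n - 1) / 2) * qDescFactorial q m n * qHermite q (m - n) x

def SatisfiesQBHermiteRec (f : ℕ → ℕ → ℝ) : Prop :=
  ∀ n m, f (n + 2) m =
    f (n + 1) (m + 1) - q ^ (n + 1) * x * f (n + 1) m + q ^ n * qInt q (n + 1) * f n m

variable {q x}

lemma SatisfiesQBHermiteRec.eq {f g : ℕ → ℕ → ℝ} (hf : SatisfiesQBHermiteRec q x f)
    (hg : SatisfiesQBHermiteRec q x g) (h₀ : ∀ m, f 0 m = g 0 m) (h₁ : ∀ m, f 1 m = g 1 m) :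
    f = g := by
  suffices h : ∀ n m, f n m = g n m ∧ f (n + 1) m = g (n + 1) m from
    funext fun n => funext fun m => (h n m).1
  intro n
  induction n with
  | zero => exact fun m => ⟨h₀ m, h₁ m⟩
  | succ n ih => exact fun m => ⟨(ih m).2, by rw [hf, hg, (ih m).1, (ih m).2, (ih (m + 1)).2]⟩

lemma qBHermiteSum_eq_sum_range_add (n m d : ℕ) :
    qBHermiteSum q x n m = ∑ k ∈ Finset.range (n + 1 + d),
      qBinom q n k * qB q (n - k) x * qHermite q (k + m) x := by
  rw [Finset.sum_range_add, qBHermiteSum, left_eq_add]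
  exact Finset.sum_eq_zero fun k _ => by rw [qBinom_of_lt (by omega), zero_mul, zero_mul]

lemma pow_mul_qBinom_mul_qB (hq : q ≠ -1) (n k : ℕ) :
    q ^ k * qBinom q (n + 1) k * qB q (n + 2 - k) x
      = -q ^ (n + 1) * x * (qBinom q (n + 1) k * qB q (n + 1 - k) x)
        + q ^ n * qInt q (n + 1) * (qBinom q n k * qB q (n - k) x) := by
  rcases lt_trichotomy k (n + 1) with h | rfl | h
  · obtain ⟨j, rfl⟩ := Nat.exists_eq_add_of_le (Nat.le_of_lt_succ h)
    have habsorb := qBinom_mul_qInt hq j k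
    rw [show k + j + 2 - k = j + 2 by omega, show k + j + 1 - k = j + 1 by omega,
      Nat.add_sub_cancel_left, qB_add_two]
    linear_combination q ^ k * q ^ j * qB q j x * habsorb
  · rw [show n + 2 - (n + 1) = 1 by omega, Nat.sub_self, qBinom_of_lt (Nat.lt_succ_self n)]
    simp only [qB]
    ring
  · simp [qBinom_of_lt h, qBinom_of_lt (Nat.lt_of_succ_lt h)]

lemma satisfiesQBHermiteRec_qBHermiteSum (hq : q ≠ -1) :
    SatisfiesQBHermiteRec q x (qBHermiteSum q x) := by
  intro n m
  obtain ⟨T, hT⟩ : ∃ T, T = ∑ k ∈ Finset.range (n + 3),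
      q ^ k * qBinom q (n + 1) k * qB q (n + 2 - k) x * qHermite q (k + m) x := ⟨_, rfl⟩
  have pascal : qBHermiteSum q x (n + 2) m = qBHermiteSum q x (n + 1) (m + 1) + T := by
    rw [qBHermiteSum, qBHermiteSum, Finset.sum_range_succ', hT, Finset.sum_range_succ' _ (n + 2),
      qBinom_zero_right hq, qBinom_zero_right hq, ← add_assoc, ← Finset.sum_add_distrib]
    congr 1
    · refine Finset.sum_congr rfl fun k _ => ?_
      rw [qBinom_succ_succ hq, show n + 2 - (k + 1) = n + 1 - k by omega, add_right_comm k 1 m,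
        add_assoc k]
      ring
    · ring
  have lowered : T = -q ^ (n + 1) * x * qBHermiteSum q x (n + 1) m
      + q ^ n * qInt q (n + 1) * qBHermiteSum q x n m := by
    rw [hT, qBHermiteSum_eq_sum_range_add (n + 1) m 1, qBHermiteSum_eq_sum_range_add n m 2,
      Finset.mul_sum, Finset.mul_sum, ← Finset.sum_add_distrib]
    refine Finset.sum_congr rfl fun k _ => ?_
    rw [pow_mul_qBinom_mul_qB hq]
    ring
  rw [pascal, lowered]
  ring

lemma satisfiesQBHermiteRec_qBHermiteClosedForm :
    SatisfiesQBHermiteRec q x (qBHermiteClosedForm q x) := by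
  intro n m
  simp only [qBHermiteClosedForm]
  rcases lt_or_ge m n with h | h
  · simp [qDescFactorial_eq_zero_of_lt, h, Nat.lt_succ_of_lt, Nat.lt_succ_of_lt h]
  obtain ⟨d, rfl⟩ := Nat.exists_eq_add_of_le h
  have hD₂ : qDescFactorial q (n + d) (n + 2)
      = qDescFactorial q (n + d) n * qInt q d * qInt q (d - 1) := by
    rw [qDescFactorial_succ, qDescFactorial_succ, show n + d - (n + 1) = d - 1 by omega,
      Nat.add_sub_cancel_left]
  have hD₁ : qDescFactorial q (n + d) (n + 1) = qDescFactorial q (n + d) n * qInt q d := by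
    rw [qDescFactorial_succ, Nat.add_sub_cancel_left]
  have hInt : qInt q (n + d + 1) = qInt q (n + 1) + q ^ (n + 1) * qInt q d := by
    rw [← qInt_add, add_right_comm]
  rw [show n + 2 = n + 1 + 1 from rfl, pow_triangle_succ, pow_triangle_succ, hD₂,
    qDescFactorial_succ_succ, hD₁, hInt, show n + d - (n + 1 + 1) = d - 2 by omega,
    Nat.add_sub_add_right, show n + d - (n + 1) = d - 1 by omega, Nat.add_sub_cancel_left]
  linear_combination (-(-1) ^ n * q ^ (2 * n + 1) * q ^ (n * (n - 1) / 2)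
    * qDescFactorial q (n + d) n) * qInt_mul_qHermite q x d

lemma qBHermiteSum_eq_closedForm (hq : q ≠ -1) :
    qBHermiteSum q x = qBHermiteClosedForm q x := by
  refine (satisfiesQBHermiteRec_qBHermiteSum hq).eq satisfiesQBHermiteRec_qBHermiteClosedForm
    (fun m => ?_) (fun m => ?_)
  · simp [qBHermiteSum, qBHermiteClosedForm, qBinom_zero_right hq, qB]
  · rw [qBHermiteSum, Finset.sum_range_succ, Finset.sum_range_one, qBinom_zero_right hq,
      qBinom_self hq, qBHermiteClosedForm, add_comm 1 m, qHermite_succ]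
    simp only [qB, qDescFactorial, Finset.prod_range_one, Nat.sub_zero, Nat.sub_self, zero_add,
      Nat.mul_zero, Nat.zero_div, pow_zero]
    ring

end Sum

/-- `Σ_{k=0}^n [n choose k]_q·B_{n-k}(x|q)·H_{k+m}(x|q)` vanishes for `n > m`
and equals `(-1)ⁿ·q^{n(n-1)/2}·([m]_q!/[m-n]_q!)·H_{m-n}(x|q)` for `m ≥ n`. -/
theorem sum_qB_qHermite (n m : ℕ) (x q : ℝ) (hq : |q| < 1) :
    (n > m →
      ∑ k ∈ Finset.range (n + 1), qBinom q n k * qB q (n - k) x * qHermite q (k + m) x = 0) ∧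
    (n ≤ m →
      ∑ k ∈ Finset.range (n + 1), qBinom q n k * qB q (n - k) x * qHermite q (k + m) x =
        (-1 : ℝ) ^ n * q ^ (n * (n - 1) / 2) * (qFact q m / qFact q (m - n)) *
          qHermite q (m - n) x) := by
  have hq' : q ≠ -1 := by
    rintro rfl
    norm_num at hq
  have h := congrFun (congrFun (qBHermiteSum_eq_closedForm (x := x) hq') n) m
  simp only [qBHermiteSum, qBHermiteClosedForm] at h
  rw [h]
  exact ⟨fun hlt => by rw [qDescFactorial_eq_zero_of_lt q hlt, mul_zero, zero_mul],
    fun hle => by rw [qDescFactorial_eq_div hq' hle]⟩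
end
end
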